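/- For any fixed reals a < b, the function f : ℝ → ℝ defined by f(x) = log( Φ(b−x) − Φ(a−x) ) is concave on ℝ (note Φ(b−x) − Φ(a−x) > 0 for every x, so f is well defined). -/

import Mathlib

open MeasureTheory Real Filter

/-- Standard Gaussian density. -/
noncomputable def phi (x : ℝ) : ℝ := (Real.sqrt (2 * Real.pi))⁻¹ * Real.exp (-(x ^ 2) / 2)

/-- Standard Gaussian cumulative distribution function. -/
noncomputable def Phi (x : ℝ) : ℝ := ∫ t in Set.Iic x, phi t

/-!
Write `F(x) = Φ(b - x) - Φ(a - x)`, so that `F' = φ(a - x) - φ(b - x)` and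
`F'' = (a - x) φ(a - x) - (b - x) φ(b - x)`. Concavity of `log F` is `F F'' ≤ F'²`, which, with
`u = a - x < v = b - x`, says that the Gaussian truncated to `[u, v]` has variance at most `1`:
`Z (u φ(u) - v φ(v)) ≤ (φ(u) - φ(v))²` with `Z = Φ(v) - Φ(u)`. This follows from the fact that the
truncated mean `m = (φ(u) - φ(v)) / Z` lies in `[u, v]`, since then
`Z (u φ(u) - v φ(v)) - (φ(u) - φ(v))² = Z ((u - m) φ(u) - (v - m) φ(v)) ≤ 0`.
The bounds `u ≤ m ≤ v` hold because `t ↦ φ(t) + c Φ(t)` has derivative `(c - t) φ(t)`, so it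
decreases on `[c, ∞)` and increases on `(-∞, c]`.
-/

lemma phi_pos (x : ℝ) : 0 < phi x :=
  mul_pos (inv_pos.2 (Real.sqrt_pos.2 (by positivity))) (Real.exp_pos _)

lemma continuous_phi : Continuous phi := by
  unfold phi; fun_prop

lemma hasDerivAt_phi (x : ℝ) : HasDerivAt phi (-x * phi x) x := by
  have hexp : HasDerivAt (fun y : ℝ => -(y ^ 2) / 2) (-x) x :=
    ((hasDerivAt_pow 2 x).neg.div_const 2).congr_deriv (by ring)
  exact ((hexp.exp).const_mul (Real.sqrt (2 * Real.pi))⁻¹).congr_deriv (by unfold phi; ring)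

lemma integrable_phi : Integrable phi := by
  refine ((integrable_exp_neg_mul_sq (b := 1 / 2) (by norm_num)).const_mul
    (Real.sqrt (2 * Real.pi))⁻¹).congr (Eventually.of_forall fun x => ?_)
  unfold phi
  ring_nf

lemma hasDerivAt_Phi (x : ℝ) : HasDerivAt Phi (phi x) x := by
  have hPhi : ∀ y, Phi 0 + ∫ t in (0 : ℝ)..y, phi t = Phi y := fun y => by
    rw [← intervalIntegral.integral_Iic_sub_Iic integrable_phi.integrableOn
      integrable_phi.integrableOn]
    unfold Phi
    ring
  refine ((intervalIntegral.integral_hasDerivAt_right (continuous_phi.intervalIntegrable _ _)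
    (continuous_phi.stronglyMeasurableAtFilter _ _) continuous_phi.continuousAt).const_add
    (Phi 0)).congr_of_eventuallyEq (Eventually.of_forall fun y => (hPhi y).symm)

lemma strictMono_Phi : StrictMono Phi :=
  strictMono_of_hasDerivAt_pos hasDerivAt_Phi phi_pos

lemma hasDerivAt_phi_add_mul_Phi (c x : ℝ) :
    HasDerivAt (fun t => phi t + c * Phi t) ((c - x) * phi x) x :=
  ((hasDerivAt_phi x).add ((hasDerivAt_Phi x).const_mul c)).congr_deriv (by ring)

lemma antitoneOn_phi_add_mul_Phi (c : ℝ) : AntitoneOn (fun t => phi t + c * Phi t) (Set.Ici c) := by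
  refine antitoneOn_of_hasDerivWithinAt_nonpos (convex_Ici c)
    (fun x _ => (hasDerivAt_phi_add_mul_Phi c x).continuousAt.continuousWithinAt)
    (fun x _ => (hasDerivAt_phi_add_mul_Phi c x).hasDerivWithinAt) fun x hx => ?_
  rw [interior_Ici] at hx
  exact mul_nonpos_of_nonpos_of_nonneg (by linarith [hx.out]) (phi_pos x).le

lemma monotoneOn_phi_add_mul_Phi (c : ℝ) : MonotoneOn (fun t => phi t + c * Phi t) (Set.Iic c) := by
  refine monotoneOn_of_hasDerivWithinAt_nonneg (convex_Iic c)
    (fun x _ => (hasDerivAt_phi_add_mul_Phi c x).continuousAt.continuousWithinAt)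
    (fun x _ => (hasDerivAt_phi_add_mul_Phi c x).hasDerivWithinAt) fun x hx => ?_
  rw [interior_Iic] at hx
  exact mul_nonneg (by linarith [hx.out]) (phi_pos x).le

lemma mul_Phi_sub_le_phi_sub {u v : ℝ} (huv : u ≤ v) : u * (Phi v - Phi u) ≤ phi u - phi v := by
  have := antitoneOn_phi_add_mul_Phi u Set.self_mem_Ici huv huv
  linarith

lemma phi_sub_le_mul_Phi_sub {u v : ℝ} (huv : u ≤ v) : phi u - phi v ≤ v * (Phi v - Phi u) := by
  have := monotoneOn_phi_add_mul_Phi v huv Set.self_mem_Iic huv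
  linarith

lemma Phi_sub_mul_le_sq {u v : ℝ} (huv : u ≤ v) :
    (Phi v - Phi u) * (u * phi u - v * phi v) ≤ (phi u - phi v) ^ 2 := by
  have hu :=
    mul_nonpos_of_nonpos_of_nonneg (sub_nonpos.2 (mul_Phi_sub_le_phi_sub huv)) (phi_pos u).le
  have hv := mul_nonneg (sub_nonneg.2 (phi_sub_le_mul_Phi_sub huv)) (phi_pos v).le
  linear_combination hu + hv

lemma concaveOn_log_of_mul_deriv2_le_sq {F F' F'' : ℝ → ℝ} (hF : ∀ x, HasDerivAt F (F' x) x)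
    (hF' : ∀ x, HasDerivAt F' (F'' x) x) (hpos : ∀ x, 0 < F x)
    (hle : ∀ x, F x * F'' x ≤ F' x ^ 2) : ConcaveOn ℝ Set.univ (fun x => Real.log (F x)) := by
  have hlog : ∀ x, HasDerivAt (fun x => Real.log (F x)) (F' x / F x) x := fun x =>
    (hF x).log (hpos x).ne'
  refine concaveOn_of_hasDerivWithinAt2_nonpos convex_univ
    (fun x _ => (hlog x).continuousAt.continuousWithinAt) (fun x _ => (hlog x).hasDerivWithinAt)
    (fun x _ => ((hF' x).div (hF x) (hpos x).ne').hasDerivWithinAt) fun x _ => ?_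
  exact div_nonpos_of_nonpos_of_nonneg (by linear_combination hle x) (sq_nonneg _)

/-- The function `x ↦ log(Φ(b−x) − Φ(a−x))` is concave on `ℝ`. -/
theorem log_Phi_diff_concave (a b : ℝ) (hab : a < b) :
    ConcaveOn ℝ Set.univ (fun x : ℝ => Real.log (Phi (b - x) - Phi (a - x))) := by
  refine concaveOn_log_of_mul_deriv2_le_sq (F' := fun x => phi (a - x) - phi (b - x))
    (F'' := fun x => (a - x) * phi (a - x) - (b - x) * phi (b - x)) (fun x => ?_) (fun x => ?_)
    (fun x => sub_pos.2 (strictMono_Phi (by linarith))) fun x => ?_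
  · exact (((hasDerivAt_Phi _).comp_const_sub b x).sub
      ((hasDerivAt_Phi _).comp_const_sub a x)).congr_deriv (by ring)
  · exact (((hasDerivAt_phi _).comp_const_sub a x).sub
      ((hasDerivAt_phi _).comp_const_sub b x)).congr_deriv (by ring)
  · exact Phi_sub_mul_le_sq (by linarith)
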